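/- Let R be a commutative ring, V an R-module, and φ_1, φ_2, φ_3: V → R three R-linear maps. Define the alternating trilinear form Λ(x,y,z) = det((φ_p applied to (x,y,z))_{p=1,2,3}), the 3×3 determinant of the matrix with entries φ_p(x), φ_p(y), φ_p(z). Then for all a, b, c, b', c' ∈ V: Λ(b,c,c')·Λ(a,c,b')·Λ(b,b',c') + Λ(b,c,b')·Λ(c,b',c')·Λ(a,b,c') − Λ(b,c,b')·Λ(a,c,c')·Λ(b,b',c') − Λ(b,c,c')·Λ(c,b',c')·Λ(a,b,b') = 0. -/

import Mathlib

/-!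
Write `[x y z]` for `Λ x y z`. The left-hand side is `[b b' c'] * A + [c b' c'] * B` with
`A = [b c c'][a c b'] - [b c b'][a c c']` and `B = [b c b'][a b c'] - [b c c'][a b b']`.
Both are three-term Grassmann–Plücker relations, `A = [b c a][c b' c']` and
`B = -[b c a][b b' c']`, so the two products cancel. The Plücker relation for `3 × 3`
determinants is the Binet–Cauchy identity for `x ⨯₃ y` and `x ⨯₃ u`, because
`(x ⨯₃ y) ⨯₃ (x ⨯₃ u) = [x y u] • x`.
-/

open Matrix

section CrossProduct

variable {R : Type*} [CommRing R]

theorem cross_dotProduct_eq_det (x y z : Fin 3 → R) : x ⨯₃ y ⬝ᵥ z = det ![x, y, z] := by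
  rw [dotProduct_comm, triple_product_permutation, triple_product_eq_det]

theorem cross_cross_cross_same (x y u : Fin 3 → R) :
    (x ⨯₃ y) ⨯₃ (x ⨯₃ u) = det ![x, y, u] • x := by
  rw [cross_cross_eq_smul_sub_smul', dot_self_cross, zero_smul, sub_zero,
    cross_dotProduct_eq_det]

theorem det_vec3_plucker (x y z u w : Fin 3 → R) :
    det ![x, y, z] * det ![x, u, w] - det ![x, y, w] * det ![x, u, z] =
      det ![x, y, u] * det ![x, z, w] := by
  have h := cross_dot_cross (x ⨯₃ y) (x ⨯₃ u) z w
  rwa [cross_cross_cross_same, smul_dotProduct, smul_eq_mul, triple_product_eq_det,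
    cross_dotProduct_eq_det, cross_dotProduct_eq_det, cross_dotProduct_eq_det,
    cross_dotProduct_eq_det, eq_comm] at h

theorem det_vec3_swap_left (x y z : Fin 3 → R) : det ![y, x, z] = -det ![x, y, z] := by
  rw [← triple_product_eq_det, ← triple_product_eq_det, triple_product_permutation,
    ← cross_anticomm, dotProduct_neg, dotProduct_comm]

theorem det_vec3_swap_right (x y z : Fin 3 → R) : det ![x, z, y] = -det ![x, y, z] := by
  rw [← triple_product_eq_det, ← triple_product_eq_det, ← cross_anticomm, dotProduct_neg]

end CrossProduct

theorem plucker_identity_for_alternating_three_form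
    {R : Type*} [CommRing R] {V : Type*} [AddCommGroup V] [Module R V]
    (φ : Fin 3 → V →ₗ[R] R) (Λ : V → V → V → R)
    (hΛ : ∀ x y z : V,
      Λ x y z = Matrix.det (Matrix.of fun p q : Fin 3 => φ p (![x, y, z] q)))
    (a b c b' c' : V) :
    Λ b c c' * Λ a c b' * Λ b b' c' + Λ b c b' * Λ c b' c' * Λ a b c' -
        Λ b c b' * Λ a c c' * Λ b b' c' - Λ b c c' * Λ c b' c' * Λ a b b' = 0 := by
  set u := LinearMap.pi φ
  have hΛu : ∀ x y z, Λ x y z = det ![u x, u y, u z] := by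
    intro x y z
    rw [hΛ, ← det_transpose]
    congr
    ext p q
    fin_cases q <;> rfl
  have hA : Λ b c c' * Λ a c b' - Λ b c b' * Λ a c c' = Λ b c a * Λ c b' c' := by
    simp only [hΛu, det_vec3_swap_left (u c) (u b), det_vec3_swap_left (u c) (u a)]
    linear_combination det_vec3_plucker (u c) (u b) (u c') (u a) (u b') +
      det ![u c, u b, u a] * det_vec3_swap_right (u c) (u b') (u c')
  have hB : Λ b c b' * Λ a b c' - Λ b c c' * Λ a b b' = -(Λ b c a * Λ b b' c') := by
    simp only [hΛu, det_vec3_swap_left (u b) (u a)]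
    linear_combination -det_vec3_plucker (u b) (u c) (u b') (u a) (u c')
  linear_combination Λ b b' c' * hA + Λ c b' c' * hB
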